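/- arXiv:2106.14783 — 3 statements merged into one kernel-verified Lean document; each statement's English description precedes it below -/
import Mathlib

section
/- Soundness of certifying synthesis with LTL certificates: Let φ be an LTL formula over V, S = ⟨s_1,…,s_n⟩ a vector of strategies and Ψ = ⟨ψ_1,…,ψ_n⟩ a vector of LTL certificates for the system processes. If (S,Ψ) is a solution of certifying synthesis for φ, then s_1 ∥ … ∥ s_n ⊨ φ. -/
namespace CertSynth

/-- Syntax of LTL formulas over atomic propositions `V`. -/
inductive LTL (V : Type) : Type
  | atom : V → LTL V
  | neg : LTL V → LTL V
  | disj : LTL V → LTL V → LTL V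
  | conj : LTL V → LTL V → LTL V
  | next : LTL V → LTL V
  | untl : LTL V → LTL V → LTL V

namespace LTL

variable {V : Type}

/-- Standard semantics of LTL over infinite words in `(2^V)^ω`. -/
def sat : (ℕ → Set V) → LTL V → Prop
  | σ, atom a => a ∈ σ 0
  | σ, neg φ => ¬ sat σ φ
  | σ, disj φ ψ => sat σ φ ∨ sat σ ψ
  | σ, conj φ ψ => sat σ φ ∧ sat σ ψ
  | σ, next φ => sat (fun k => σ (k + 1)) φ
  | σ, untl φ ψ => ∃ t, sat (fun k => σ (k + t)) ψ ∧ ∀ u < t, sat (fun k => σ (k + u)) φ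

/-- The atomic propositions occurring in a formula. -/
def props : LTL V → Set V
  | atom a => {a}
  | neg φ => props φ
  | disj φ ψ => props φ ∪ props ψ
  | conj φ ψ => props φ ∪ props ψ
  | next φ => props φ
  | untl φ ψ => props φ ∪ props ψ

end LTL

/-- A Moore transition system over inputs `I` and outputs `O`: a finite state set,
an initial state, a (total) transition function reading letters in `2^I` and a
labeling function producing letters in `2^O`. -/
structure Moore (V : Type) (I O : Set V) where
  S : Type
  finS : Finite S
  init : S
  trans : S → Set V → S
  label : S → Set V
  label_sub : ∀ t, label t ⊆ O

namespace Moore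

variable {V : Type} {I O : Set V}

/-- The run of a Moore transition system on an input sequence. -/
def run (m : Moore V I O) (γ : ℕ → Set V) : ℕ → m.S
  | 0 => m.init
  | k + 1 => m.trans (run m γ k) (γ k ∩ I)

/-- The computation `comp(m,γ)` of `m` on the input sequence `γ`: its `k`-th letter
is the `k`-th input letter joined with the label of the `k`-th state of the run. -/
def comp (m : Moore V I O) (γ : ℕ → Set V) (k : ℕ) : Set V :=
  (γ k ∩ I) ∪ m.label (m.run γ k)

end Moore

/-- Simulation `T₂ ≼_{O₁} T₁` of Moore transition systems over the same inputs `I`. -/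
def Sim {V : Type} {I O₁ O₂ : Set V} (T₂ : Moore V I O₂) (T₁ : Moore V I O₁) : Prop :=
  ∃ R : T₂.S → T₁.S → Prop,
    R T₂.init T₁.init ∧
    (∀ t₂ t₁, R t₂ t₁ → T₂.label t₂ ∩ O₁ = T₁.label t₁) ∧
    (∀ t₂ t₁ a, a ⊆ I → R t₂ t₁ → R (T₂.trans t₂ a) (T₁.trans t₁ a))

/-- A Moore transition system with a partial transition function. -/
structure PMoore (V : Type) (I O : Set V) where
  S : Type
  finS : Finite S
  init : S
  trans : S → Set V → Option S
  label : S → Set V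
  label_sub : ∀ t, label t ⊆ O

namespace PMoore

variable {V : Type} {I O : Set V}

/-- The (partial) run of a partial Moore transition system on an input sequence. -/
def prun (m : PMoore V I O) (γ : ℕ → Set V) : ℕ → Option m.S
  | 0 => some m.init
  | k + 1 => (prun m γ k).bind fun st => m.trans st (γ k ∩ I)

/-- The computation of `m` on `γ` is infinite. -/
def Inf (m : PMoore V I O) (γ : ℕ → Set V) : Prop := ∀ k, (m.prun γ k).isSome

/-- The computation of `m` on `γ` (defaulting to the input letter after the
computation has ended). -/
def compD (m : PMoore V I O) (γ : ℕ → Set V) (k : ℕ) : Set V :=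
  (γ k ∩ I) ∪ (match m.prun γ k with | some st => m.label st | none => ∅)

/-- The finite or infinite word `comp(m,γ) ∪ γ'`. -/
def pcomp (m : PMoore V I O) (γ γ' : ℕ → Set V) (k : ℕ) : Option (Set V) :=
  (m.prun γ k).map fun st => (γ k ∩ I) ∪ m.label st ∪ γ' k

end PMoore

/-- Simulation of a partial Moore transition system by a complete one. -/
def PSim {V : Type} {I O₁ O₂ : Set V} (T₂ : PMoore V I O₂) (T₁ : Moore V I O₁) : Prop :=
  ∃ R : T₂.S → T₁.S → Prop,
    R T₂.init T₁.init ∧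
    (∀ t₂ t₁, R t₂ t₁ → T₂.label t₂ ∩ O₁ = T₁.label t₁) ∧
    (∀ t₂ t₁ a, a ⊆ I → R t₂ t₁ → ∀ t₂', T₂.trans t₂ a = some t₂' → R t₂' (T₁.trans t₁ a))

/-- A distributed architecture with `n ≥ 2` system processes over the finite set `V`
of variables: input and output variables for every system process, output variables
of the environment, with the required disjointness conditions, `V = ⋃ᵢ Vᵢ`, and
`inp ∖ out = O_env`. -/
structure Arch (V : Type) (n : ℕ) where
  I : Fin n → Set V
  O : Fin n → Set V
  Oenv : Set V
  two_le : 2 ≤ n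
  disj_IO : ∀ i, Disjoint (I i) (O i)
  disj_O : ∀ i j, i ≠ j → Disjoint (O i) (O j)
  disj_Oenv : ∀ i, Disjoint Oenv (O i)
  cover : ∀ v : V, ∃ i, v ∈ I i ∪ O i
  env_eq : (⋃ i, I i) \ (⋃ i, O i) = Oenv

namespace Arch

variable {V : Type} {n : ℕ}

/-- The variables `Vᵢ = Iᵢ ∪ Oᵢ` of process `i`. -/
def Vars (A : Arch V n) (i : Fin n) : Set V := A.I i ∪ A.O i

/-- `inp`, the union of the inputs of all system processes. -/
def inp (A : Arch V n) : Set V := ⋃ i, A.I i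

/-- `out`, the union of the outputs of all system processes. -/
def out (A : Arch V n) : Set V := ⋃ i, A.O i

/-- The guarantee output variables `OGᵢ = Oᵢ ∩ inp` of process `i`. -/
def Og (A : Arch V n) (i : Fin n) : Set V := A.O i ∩ A.inp

end Arch

section Defs

variable {V : Type} {n : ℕ}

/-- A strategy for system process `i`: a Moore TS over `Iᵢ` and `Oᵢ`. -/
abbrev Strategy (A : Arch V n) (i : Fin n) := Moore V (A.I i) (A.O i)

/-- A guarantee transition system (GTS) for process `i`: a Moore TS over `Iᵢ` and `OGᵢ`. -/
abbrev GTS (A : Arch V n) (i : Fin n) := Moore V (A.I i) (A.Og i)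

/-- A (candidate) local strategy for process `i`: a partial Moore TS over `Iᵢ` and `Oᵢ`. -/
abbrev LocalStrategy (A : Arch V n) (i : Fin n) := PMoore V (A.I i) (A.O i)

/-- The parallel composition `s₁ ∥ … ∥ sₙ`: product state space, componentwise
transitions where each component receives the environment inputs together with the
outputs of the other components, and the union of the labelings as labels. -/
def par (A : Arch V n) (s : ∀ i, Strategy A i) : Moore V A.Oenv A.out where
  S := ∀ i, (s i).S
  finS := by
    haveI : ∀ i, Finite ((s i).S) := fun i => (s i).finS
    infer_instance
  init := fun i => (s i).init
  trans := fun st a i => (s i).trans (st i) ((a ∪ ⋃ j, (s j).label (st j)) ∩ A.I i)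
  label := fun st => ⋃ i, (s i).label (st i)
  label_sub := fun st => Set.iUnion_mono fun i => (s i).label_sub (st i)

open Classical in
/-- The parallel composition of partial Moore transition systems. -/
noncomputable def pPar (A : Arch V n) (s : ∀ i, LocalStrategy A i) :
    PMoore V A.Oenv A.out where
  S := ∀ i, (s i).S
  finS := by
    haveI : ∀ i, Finite ((s i).S) := fun i => (s i).finS
    infer_instance
  init := fun i => (s i).init
  trans := fun st a =>
    if h : ∀ i, ((s i).trans (st i) ((a ∪ ⋃ j, (s j).label (st j)) ∩ A.I i)).isSome then
      some fun i => ((s i).trans (st i) ((a ∪ ⋃ j, (s j).label (st j)) ∩ A.I i)).get (h i)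
    else none
  label := fun st => ⋃ i, (s i).label (st i)
  label_sub := fun st => Set.iUnion_mono fun i => (s i).label_sub (st i)

/-- `σ ⊨ Φ` for a specification `Φ = ξ₁ ∧ … ∧ ξₖ` given by its list of conjuncts. -/
def satSpec (Φ : List (LTL V)) (σ : ℕ → Set V) : Prop := ∀ ξ ∈ Φ, LTL.sat σ ξ

/-- `ξ` is a conjunct of the subspecification `φᵢ` of the decomposition of `Φ`:
it is a conjunct of `Φ` that mentions an output of `pᵢ` or no output at all. -/
def inDecomp (A : Arch V n) (Φ : List (LTL V)) (i : Fin n) (ξ : LTL V) : Prop :=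
  ξ ∈ Φ ∧ ((ξ.props ∩ A.O i).Nonempty ∨ ξ.props ∩ A.out = ∅)

/-- `σ ⊨ φᵢ`, where `φᵢ` is the `i`-th subspecification of the decomposition of `Φ`. -/
def satDecomp (A : Arch V n) (Φ : List (LTL V)) (i : Fin n) (σ : ℕ → Set V) : Prop :=
  ∀ ξ, inDecomp A Φ i ξ → LTL.sat σ ξ

/-- The atomic propositions `prop(φᵢ)` of the `i`-th subspecification. -/
def propsDecomp (A : Arch V n) (Φ : List (LTL V)) (i : Fin n) : Set V :=
  {v | ∃ ξ, inDecomp A Φ i ξ ∧ v ∈ ξ.props}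

/-- The relevant processes `Rᵢ = { pⱼ | j ≠ i, Oⱼ ∩ prop(φᵢ) ≠ ∅ }` of process `i`. -/
def Rel (A : Arch V n) (Φ : List (LTL V)) (i : Fin n) : Set (Fin n) :=
  {j | j ≠ i ∧ (A.O j ∩ propsDecomp A Φ i).Nonempty}

/-- The word `comp(sᵢ,γ) ∪ γ'`. -/
def cword (A : Arch V n) {i : Fin n} (s : Strategy A i) (γ γ' : ℕ → Set V) : ℕ → Set V :=
  fun k => s.comp γ k ∪ γ' k

/-- `sᵢ ⊨ ψ`: every computation of `sᵢ`, joined with arbitrary valuations of the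
variables outside `Vᵢ`, satisfies `ψ`. -/
def StratSat (A : Arch V n) {i : Fin n} (s : Strategy A i) (ψ : LTL V) : Prop :=
  ∀ γ γ' : ℕ → Set V, (∀ k, γ k ⊆ A.I i) → (∀ k, γ' k ⊆ (A.Vars i)ᶜ) →
    LTL.sat (cword A s γ γ') ψ

/-- `(S,Ψ)` is a solution of certifying synthesis with LTL certificates for `Φ`,
where process `i` uses the certificates of the processes in `J i`:
`sᵢ ⊨ ψᵢ ∧ (⋀_{j ∈ J i} ψⱼ → φᵢ)` for every system process `i`. -/
def CertSolLTLWith (A : Arch V n) (Φ : List (LTL V)) (s : ∀ i, Strategy A i)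
    (ψ : Fin n → LTL V) (J : Fin n → Set (Fin n)) : Prop :=
  ∀ i, ∀ γ γ' : ℕ → Set V, (∀ k, γ k ⊆ A.I i) → (∀ k, γ' k ⊆ (A.Vars i)ᶜ) →
    LTL.sat (cword A (s i) γ γ') (ψ i) ∧
      ((∀ j ∈ J i, LTL.sat (cword A (s i) γ γ') (ψ j)) →
        satDecomp A Φ i (cword A (s i) γ γ'))

/-- `(S,Ψ)` is a solution of certifying synthesis with LTL certificates for `Φ`. -/
def CertSolLTL (A : Arch V n) (Φ : List (LTL V)) (s : ∀ i, Strategy A i)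
    (ψ : Fin n → LTL V) : Prop :=
  CertSolLTLWith A Φ s ψ (fun i => {j | j ≠ i})

/-- `(S,Ψ)_R` is a solution of certifying synthesis with relevant processes for `Φ`. -/
def CertSolLTLR (A : Arch V n) (Φ : List (LTL V)) (s : ∀ i, Strategy A i)
    (ψ : Fin n → LTL V) : Prop :=
  CertSolLTLWith A Φ s ψ (fun i => Rel A Φ i)

/-- The first `t` letters of `σ` form a valid history w.r.t. the GTSs `{g j | j ∈ J}`:
for every `j ∈ J`, every position `k < t` and every infinite extension of the
length-`t` prefix of `σ`, the letters agree on `OGⱼ` with the computation of `g j`. -/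
def ValidHist (A : Arch V n) (g : ∀ j, GTS A j) (J : Set (Fin n)) (t : ℕ)
    (σ : ℕ → Set V) : Prop :=
  ∀ j ∈ J, ∀ k < t, ∀ σh : ℕ → Set V, (∀ l < t, σh l = σ l) →
    σ k ∩ A.Og j = (g j).comp σh k ∩ A.Og j

/-- `sᵢ` locally satisfies `φᵢ` w.r.t. the GTSs of the processes in `J`. -/
def LocalSat (A : Arch V n) (Φ : List (LTL V)) {i : Fin n} (s : Strategy A i)
    (g : ∀ j, GTS A j) (J : Set (Fin n)) : Prop :=
  ∀ γ γ' : ℕ → Set V, (∀ k, γ k ⊆ A.I i) → (∀ k, γ' k ⊆ (A.Vars i)ᶜ) →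
    (∀ t, ValidHist A g J t (cword A s γ γ')) →
    satDecomp A Φ i (cword A s γ γ')

/-- `(S,G)` is a solution of certifying synthesis with guarantee transition systems,
where process `i` uses the guarantees of the processes in `J i`. -/
def CertSolGTSWith (A : Arch V n) (Φ : List (LTL V)) (s : ∀ i, Strategy A i)
    (g : ∀ i, GTS A i) (J : Fin n → Set (Fin n)) : Prop :=
  ∀ i, Sim (s i) (g i) ∧ LocalSat A Φ (s i) g (J i)

/-- `(S,G)` is a solution of certifying synthesis with guarantee transition systems
(equivalently, with local satisfaction) for `Φ`. -/
def CertSolGTS (A : Arch V n) (Φ : List (LTL V)) (s : ∀ i, Strategy A i)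
    (g : ∀ i, GTS A i) : Prop :=
  CertSolGTSWith A Φ s g (fun i => {j | j ≠ i})

/-- `(S,G)_R` is a solution of certifying synthesis with relevant processes for `Φ`. -/
def CertSolGTSR (A : Arch V n) (Φ : List (LTL V)) (s : ∀ i, Strategy A i)
    (g : ∀ i, GTS A i) : Prop :=
  CertSolGTSWith A Φ s g (fun i => Rel A Φ i)

/-- The copy of the strategy `s` whose labels are restricted to the guarantee
output variables `OGᵢ`. -/
def toGTS (A : Arch V n) {i : Fin n} (s : Strategy A i) : GTS A i where
  S := s.S
  finS := s.finS
  init := s.init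
  trans := s.trans
  label := fun t => s.label t ∩ A.Og i
  label_sub := fun _ => Set.inter_subset_right

/-- `s₁ ∥ … ∥ sₙ ⊨ Φ`. -/
def ParSat (A : Arch V n) (s : ∀ i, Strategy A i) (Φ : List (LTL V)) : Prop :=
  ∀ γ γ' : ℕ → Set V, (∀ k, γ k ⊆ A.Oenv) → (∀ k, γ' k ⊆ (A.Oenv ∪ A.out)ᶜ) →
    satSpec Φ (fun k => (par A s).comp γ k ∪ γ' k)

/-- A universal co-Büchi automaton over the alphabet `2^V`. -/
structure UCB (V : Type) where
  Q : Type
  finQ : Finite Q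
  init : Q
  δ : Q → Set V → Q → Prop
  F : Set Q

/-- The word `σ` is accepted by the universal co-Büchi automaton `Aut`:
every run of `σ` visits rejecting states only finitely often. -/
def UCB.accepts (Aut : UCB V) (σ : ℕ → Set V) : Prop :=
  ∀ r : ℕ → Aut.Q, r 0 = Aut.init → (∀ k, Aut.δ (r k) (σ k) (r (k + 1))) →
    {k | r k ∈ Aut.F}.Finite

/-- Every (finite or infinite) run of `Aut` induced by the possibly finite word `w`
contains only finitely many visits to rejecting states. -/
def UCB.RunsOk (Aut : UCB V) (w : ℕ → Option (Set V)) : Prop :=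
  ∀ r : ℕ → Aut.Q, r 0 = Aut.init →
    (∀ k a, w k = some a → Aut.δ (r k) a (r (k + 1))) →
    {k | r k ∈ Aut.F ∧ ∀ l < k, (w l).isSome}.Finite

/-- `s` is a local strategy for process `i` w.r.t. the GTSs `{g j | j ∈ J}`:
its computation on `γ` is infinite iff some valuation `γ'` of the remaining
variables makes all prefixes of `comp(s,γ) ∪ γ'` valid histories. -/
def IsLocalStrategy (A : Arch V n) {i : Fin n} (g : ∀ j, GTS A j) (J : Set (Fin n))
    (s : LocalStrategy A i) : Prop :=
  ∀ γ : ℕ → Set V, (∀ k, γ k ⊆ A.I i) →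
    (s.Inf γ ↔ ∃ γ' : ℕ → Set V, (∀ k, γ' k ⊆ (A.Vars i)ᶜ) ∧
      ∀ t, ValidHist A g J t (fun k => s.compD γ k ∪ γ' k))

/-- `(S,G)` is a solution of certifying synthesis with local strategies for `Φ`:
for every system process `i`, `sᵢ ≼_{OGᵢ} gᵢ` and, for every universal co-Büchi
automaton with `L(Aᵢ) = L(φᵢ)`, all runs induced by `comp(sᵢ,γ) ∪ γ'` contain only
finitely many visits to rejecting states. -/
def CertSolLocal (A : Arch V n) (Φ : List (LTL V)) (s : ∀ i, LocalStrategy A i)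
    (g : ∀ i, GTS A i) : Prop :=
  ∀ i, PSim (s i) (g i) ∧
    ∀ Aut : UCB V, (∀ σ : ℕ → Set V, Aut.accepts σ ↔ satDecomp A Φ i σ) →
      ∀ γ γ' : ℕ → Set V, (∀ k, γ k ⊆ A.I i) → (∀ k, γ' k ⊆ (A.Vars i)ᶜ) →
        Aut.RunsOk ((s i).pcomp γ γ')

/-- `s'` is the extension of the local strategy `s` w.r.t. `G`: it behaves like `s`
on inputs with infinite computation and like the own guarantee `gᵢ` (joined with some
valuation of the non-guarantee outputs) otherwise. -/
def IsExtension (A : Arch V n) {i : Fin n} (s : LocalStrategy A i) (gi : GTS A i)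
    (s' : Strategy A i) : Prop :=
  ∀ γ : ℕ → Set V, (∀ k, γ k ⊆ A.I i) →
    (s.Inf γ → ∀ k, s'.comp γ k = s.compD γ k) ∧
    (¬ s.Inf γ → ∃ σ' : ℕ → Set V, (∀ k, σ' k ⊆ A.O i \ A.Og i) ∧
      ∀ k, s'.comp γ k = gi.comp γ k ∪ σ' k)

/-- `s'` is the restriction of the complete strategy `s` to a local strategy w.r.t.
the GTSs `{g j | j ∈ J}`: a copy of `s` whose computation on `γ` is infinite iff some
valuation `γ'` of the remaining variables makes all prefixes of `comp(s,γ) ∪ γ'`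
valid histories. -/
def IsRestriction (A : Arch V n) {i : Fin n} (g : ∀ j, GTS A j) (J : Set (Fin n))
    (s : Strategy A i) (s' : LocalStrategy A i) : Prop :=
  ∀ γ : ℕ → Set V, (∀ k, γ k ⊆ A.I i) →
    (∀ k, (s'.prun γ k).isSome → s'.compD γ k = s.comp γ k) ∧
    (s'.Inf γ ↔ ∃ γ' : ℕ → Set V, (∀ k, γ' k ⊆ (A.Vars i)ᶜ) ∧
      ∀ t, ValidHist A g J t (cword A s γ γ'))

/-- `s₁ ∥ … ∥ sₙ ⊨ Φ` for local strategies: all computations of the parallel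
composition are infinite and satisfy `Φ`. -/
def PParSat (A : Arch V n) (s : ∀ i, LocalStrategy A i) (Φ : List (LTL V)) : Prop :=
  ∀ γ γ' : ℕ → Set V, (∀ k, γ k ⊆ A.Oenv) → (∀ k, γ' k ⊆ (A.Oenv ∪ A.out)ᶜ) →
    (pPar A s).Inf γ ∧ satSpec Φ (fun k => (pPar A s).compD γ k ∪ γ' k)

end Defs

/-- **Soundness of certifying synthesis with LTL certificates.** If `(S,Ψ)` is a
solution of certifying synthesis for `φ`, then `s₁ ∥ … ∥ sₙ ⊨ φ`. -/
theorem soundness_certifying_synthesis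
    {V : Type} [Finite V] {n : ℕ} (A : Arch V n) (Φ : List (LTL V))
    (s : ∀ i, Strategy A i) (ψ : Fin n → LTL V)
    (h : CertSolLTL A Φ s ψ) :
    ParSat A s Φ := by
  intro γ γ' hγ hγ'
  set W : ℕ → Set V := fun k => (par A s).comp γ k ∪ γ' k with hWdef
  -- inputs are covered by Oenv ∪ out
  have hinp : ∀ i : Fin n, A.I i ⊆ A.Oenv ∪ A.out := by
    intro i v hv
    by_cases hvo : v ∈ A.out
    · exact Or.inr hvo
    · refine Or.inl ?_
      rw [← A.env_eq]
      exact ⟨Set.mem_iUnion.mpr ⟨i, hv⟩, hvo⟩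
  -- γ' is disjoint from each I i and each O i
  have hγ'I : ∀ i k, γ' k ∩ A.I i = ∅ := by
    intro i k
    apply Set.eq_empty_of_forall_notMem
    rintro v ⟨hv1, hv2⟩
    exact hγ' k hv1 (hinp i hv2)
  -- the run of s i on the projected input equals component i of the product run
  have hrun : ∀ i k, (s i).run (fun k => W k ∩ A.I i) k = (par A s).run γ k i := by
    intro i k
    induction k with
    | zero => rfl
    | succ k ih =>
      show (s i).trans _ ((W k ∩ A.I i) ∩ A.I i) =
        (s i).trans _ ((((γ k ∩ A.Oenv) ∪ ⋃ j, (s j).label ((par A s).run γ k j)) ∩ A.I i))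
      rw [ih]
      congr 1
      have : W k = ((γ k ∩ A.Oenv) ∪ ⋃ j, (s j).label ((par A s).run γ k j)) ∪ γ' k := rfl
      rw [Set.inter_assoc, Set.inter_self, this, Set.union_inter_distrib_right,
        hγ'I i k, Set.union_empty]
  -- the key word identity
  have hword : ∀ i : Fin n,
      cword A (s i) (fun k => W k ∩ A.I i) (fun k => W k ∩ (A.Vars i)ᶜ) = W := by
    intro i
    funext k
    show ((W k ∩ A.I i) ∩ A.I i) ∪ (s i).label ((s i).run (fun k => W k ∩ A.I i) k)
        ∪ (W k ∩ (A.Vars i)ᶜ) = W k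
    rw [Set.inter_assoc, Set.inter_self, hrun i k]
    apply Set.Subset.antisymm
    · apply Set.union_subset
      apply Set.union_subset
      · exact Set.inter_subset_left
      · intro v hv
        exact Or.inl (Or.inr (Set.mem_iUnion.mpr ⟨i, hv⟩))
      · exact Set.inter_subset_left
    · intro v hv
      by_cases hvi : v ∈ A.I i
      · exact Or.inl (Or.inl ⟨hv, hvi⟩)
      by_cases hvo : v ∈ A.O i
      · -- show v ∈ label of s i
        refine Or.inl (Or.inr ?_)
        rcases hv with (⟨hv1, hv2⟩ | hv3) | hv4
        · exact absurd ((A.disj_Oenv i).le_bot ⟨hv2, hvo⟩) (Set.notMem_empty v)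
        · rcases Set.mem_iUnion.mp hv3 with ⟨j, hj⟩
          by_cases hji : j = i
          · subst hji; exact hj
          · exact absurd ((A.disj_O j i hji).le_bot ⟨(s j).label_sub _ hj, hvo⟩)
              (Set.notMem_empty v)
        · exact absurd (Or.inr (Set.mem_iUnion.mpr ⟨i, hvo⟩)) (hγ' k hv4)
      · exact Or.inr ⟨hv, fun hvv => hvv.elim hvi hvo⟩
  -- each certificate holds on W, and each subspecification holds on W
  have hmain : ∀ i : Fin n,
      LTL.sat W (ψ i) ∧
        ((∀ j ∈ {j | j ≠ i}, LTL.sat W (ψ j)) → satDecomp A Φ i W) := by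
    intro i
    have := h i (fun k => W k ∩ A.I i) (fun k => W k ∩ (A.Vars i)ᶜ)
      (fun k => Set.inter_subset_right) (fun k => Set.inter_subset_right)
    rwa [hword i] at this
  have hψ : ∀ i, LTL.sat W (ψ i) := fun i => (hmain i).1
  have hdec : ∀ i, satDecomp A Φ i W := fun i => (hmain i).2 (fun j _ => hψ j)
  -- conclude
  intro ξ hξ
  by_cases hne : (ξ.props ∩ A.out).Nonempty
  · obtain ⟨v, hv1, hv2⟩ := hne
    obtain ⟨j, hj⟩ := Set.mem_iUnion.mp hv2
    exact hdec j ξ ⟨hξ, Or.inl ⟨v, hv1, hj⟩⟩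
  · have i0 : Fin n := ⟨0, lt_of_lt_of_le two_pos A.two_le⟩
    exact hdec i0 ξ ⟨hξ, Or.inr (Set.not_nonempty_iff_eq_empty.mp hne)⟩

end CertSynth
end

section
/- Soundness of certifying synthesis with LTL certificates restricted to relevant processes: Let φ be an LTL formula over V, S = ⟨s_1,…,s_n⟩ a vector of strategies and Ψ = ⟨ψ_1,…,ψ_n⟩ a vector of LTL certificates for the system processes. If (S,Ψ)_R is a solution of certifying synthesis with relevant processes for φ, then s_1 ∥ … ∥ s_n ⊨ φ. -/
namespace CertSynth

section Sound

variable {V : Type} {n : ℕ}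

lemma I_sub_env_out (A : Arch V n) (i : Fin n) : A.I i ⊆ A.Oenv ∪ A.out := by
  intro v hv
  by_cases hout : v ∈ A.out
  · exact Or.inr hout
  · refine Or.inl ?_
    rw [← A.env_eq]
    exact ⟨Set.mem_iUnion.mpr ⟨i, hv⟩, hout⟩

lemma run_agree (A : Arch V n) (s : ∀ i, Strategy A i) (γ γ' : ℕ → Set V)
    (hγ' : ∀ k, γ' k ⊆ (A.Oenv ∪ A.out)ᶜ) (σ : ℕ → Set V)
    (hσ : ∀ k, σ k = (par A s).comp γ k ∪ γ' k) (i : Fin n) (k : ℕ) :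
    (s i).run (fun k => σ k ∩ A.I i) k = (par A s).run γ k i := by
  induction k with
  | zero => rfl
  | succ k ih =>
      show (s i).trans _ _ = (s i).trans _ _
      rw [ih]
      congr 1
      ext v
      simp only [hσ, Set.mem_inter_iff, Moore.comp, par, Set.mem_union, Set.mem_iUnion]
      constructor
      · rintro ⟨⟨h1, _⟩, h2⟩
        refine ⟨?_, h2⟩
        rcases h1 with (h1 | h1) | h1
        · exact Or.inl h1
        · exact Or.inr h1
        · exact absurd (I_sub_env_out A i h2) (hγ' k h1)
      · rintro ⟨h1, h2⟩
        exact ⟨⟨Or.inl h1, h2⟩, h2⟩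

lemma cword_eq (A : Arch V n) (s : ∀ i, Strategy A i) (γ γ' : ℕ → Set V)
    (hγ : ∀ k, γ k ⊆ A.Oenv) (hγ' : ∀ k, γ' k ⊆ (A.Oenv ∪ A.out)ᶜ) (σ : ℕ → Set V)
    (hσ : ∀ k, σ k = (par A s).comp γ k ∪ γ' k) (i : Fin n) :
    cword A (s i) (fun k => σ k ∩ A.I i) (fun k => σ k ∩ (A.Vars i)ᶜ) = σ := by
  funext k
  show ((σ k ∩ A.I i) ∩ A.I i) ∪
      (s i).label ((s i).run (fun k => σ k ∩ A.I i) k) ∪ (σ k ∩ (A.Vars i)ᶜ) = σ k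
  rw [run_agree A s γ γ' hγ' σ hσ i k]
  ext v
  simp only [Set.mem_union, Set.mem_inter_iff]
  constructor
  · rintro ((⟨⟨hv, _⟩, _⟩ | hv) | ⟨hv, _⟩)
    · exact hv
    · rw [hσ k]
      left
      exact Or.inr (Set.mem_iUnion.mpr ⟨i, hv⟩)
    · exact hv
  · intro hv
    by_cases hI : v ∈ A.I i
    · exact Or.inl (Or.inl ⟨⟨hv, hI⟩, hI⟩)
    by_cases hO : v ∈ A.O i
    · left; right
      rw [hσ k] at hv
      rcases hv with hv | hv
      · rcases hv with hv | hv
        · exact absurd hO (Set.disjoint_left.mp (A.disj_Oenv i) hv.2)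
        · rcases Set.mem_iUnion.mp hv with ⟨j, hj⟩
          by_cases hij : j = i
          · subst hij; exact hj
          · exact absurd hO
              (Set.disjoint_left.mp (A.disj_O j i hij) ((s j).label_sub _ hj))
      · exact absurd (Or.inr (Set.mem_iUnion.mpr ⟨i, hO⟩)) (hγ' k hv)
    · exact Or.inr ⟨hv, fun hmem => hmem.elim hI hO⟩

end Sound

/-- **Soundness of certifying synthesis with LTL certificates restricted to relevant
processes.** If `(S,Ψ)_R` is a solution of certifying synthesis with relevant
processes for `φ`, then `s₁ ∥ … ∥ sₙ ⊨ φ`. -/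
theorem soundness_relevant_ltl
    {V : Type} [Finite V] {n : ℕ} (A : Arch V n) (Φ : List (LTL V))
    (s : ∀ i, Strategy A i) (ψ : Fin n → LTL V)
    (h : CertSolLTLR A Φ s ψ) :
    ParSat A s Φ := by
  intro γ γ' hγ hγ' ξ hξ
  set σ : ℕ → Set V := fun k => (par A s).comp γ k ∪ γ' k with hσ
  -- view from process i
  have hin : ∀ i k, (σ k ∩ A.I i : Set V) ⊆ A.I i := fun i k => Set.inter_subset_right
  have hout : ∀ i k, (σ k ∩ (A.Vars i)ᶜ : Set V) ⊆ (A.Vars i)ᶜ :=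
    fun i k => Set.inter_subset_right
  have hcw : ∀ i, cword A (s i) (fun k => σ k ∩ A.I i) (fun k => σ k ∩ (A.Vars i)ᶜ) = σ :=
    fun i => cword_eq A s γ γ' hγ hγ' σ (fun _ => rfl) i
  -- all certificates hold on σ
  have hcert : ∀ j, LTL.sat σ (ψ j) := by
    intro j
    have := (h j (fun k => σ k ∩ A.I j) (fun k => σ k ∩ (A.Vars j)ᶜ) (hin j) (hout j)).1
    rwa [hcw j] at this
  -- find a process whose decomposition contains ξ
  have hdec : ∃ i, inDecomp A Φ i ξ := by
    by_cases hempty : ξ.props ∩ A.out = ∅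
    · exact ⟨⟨0, lt_of_lt_of_le (by norm_num) A.two_le⟩, hξ, Or.inr hempty⟩
    · obtain ⟨v, hv, hvo⟩ := Set.nonempty_iff_ne_empty.mpr hempty
      obtain ⟨i, hi⟩ := Set.mem_iUnion.mp hvo
      exact ⟨i, hξ, Or.inl ⟨v, hv, hi⟩⟩
  obtain ⟨i, hi⟩ := hdec
  have := (h i (fun k => σ k ∩ A.I i) (fun k => σ k ∩ (A.Vars i)ᶜ) (hin i) (hout i)).2
  rw [hcw i] at this
  exact this (fun j _ => hcert j) ξ hi

end CertSynth
end

section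
/- Soundness of certifying synthesis with guarantee transition systems restricted to relevant processes: Let φ be an LTL formula over V, S = ⟨s_1,…,s_n⟩ a vector of strategies and G = ⟨g_1,…,g_n⟩ a vector of guarantee transition systems for the system processes. If (S,G)_R is a solution of certifying synthesis with relevant processes for φ, then s_1 ∥ … ∥ s_n ⊨ φ. -/
namespace CertSynth

/-- The run of a Moore transition system only depends on the prefix of the input. -/
theorem Moore.run_congr {V : Type} {I O : Set V} (m : Moore V I O)
    {σ σ' : ℕ → Set V} : ∀ k, (∀ l < k, σ l = σ' l) → m.run σ k = m.run σ' k
  | 0, _ => rfl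
  | k + 1, h => by
    simp only [Moore.run]
    rw [Moore.run_congr m k (fun l hl => h l (Nat.lt_succ_of_lt hl)),
      h k (Nat.lt_succ_self k)]

/-- **Soundness of certifying synthesis with guarantee transition systems restricted
to relevant processes.** If `(S,G)_R` is a solution of certifying synthesis with
relevant processes for `φ`, then `s₁ ∥ … ∥ sₙ ⊨ φ`. -/
theorem soundness_relevant_gts
    {V : Type} [Finite V] {n : ℕ} (A : Arch V n) (Φ : List (LTL V))
    (s : ∀ i, Strategy A i) (g : ∀ i, GTS A i)
    (h : CertSolGTSR A Φ s g) :
    ParSat A s Φ := by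
  intro γ γ' hγ hγ'
  set σ : ℕ → Set V := fun k => (par A s).comp γ k ∪ γ' k with hσdef
  have hIsub : ∀ i : Fin n, A.I i ⊆ A.Oenv ∪ A.out := by
    intro i v hv
    by_cases hvo : v ∈ A.out
    · exact Or.inr hvo
    · exact Or.inl (A.env_eq ▸ ⟨Set.mem_iUnion.mpr ⟨i, hv⟩, hvo⟩)
  have hγ'I : ∀ (i : Fin n) (k : ℕ), γ' k ∩ A.I i = ∅ := by
    intro i k
    ext v
    simp only [Set.mem_inter_iff, Set.mem_empty_iff_false, iff_false, not_and]
    intro h1 h2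
    exact hγ' k h1 (hIsub i h2)
  have hσI : ∀ (i : Fin n) (k : ℕ), σ k ∩ A.I i
      = ((γ k ∩ A.Oenv) ∪ ⋃ j, (s j).label (((par A s).run γ k) j)) ∩ A.I i := by
    intro i k
    show ((par A s).comp γ k ∪ γ' k) ∩ A.I i = _
    rw [Set.union_inter_distrib_right, hγ'I i k, Set.union_empty]
    rfl
  have hrun : ∀ (i : Fin n) (k : ℕ),
      (s i).run (fun k => σ k ∩ A.I i) k = ((par A s).run γ k) i := by
    intro i k
    induction k with
    | zero => rfl
    | succ k ih =>
      show (s i).trans ((s i).run (fun k => σ k ∩ A.I i) k) ((σ k ∩ A.I i) ∩ A.I i)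
        = ((par A s).run γ (k + 1)) i
      rw [Set.inter_assoc, Set.inter_self, ih, hσI i k]
      rfl
  have hlab : ∀ (i : Fin n) (k : ℕ),
      σ k ∩ A.O i = (s i).label (((par A s).run γ k) i) := by
    intro i k
    apply Set.Subset.antisymm
    · rintro v ⟨hv, hvO⟩
      rcases hv with (hv | hv) | hv
      · exact absurd hvO (Set.disjoint_left.mp (A.disj_Oenv i) hv.2)
      · obtain ⟨t, ⟨j, rfl⟩, hvj⟩ := hv
        by_cases hji : j = i
        · subst hji; exact hvj
        · exact absurd hvO
            (Set.disjoint_left.mp (A.disj_O j i hji) ((s j).label_sub _ hvj))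
      · exact absurd (Or.inr (Set.mem_iUnion.mpr ⟨i, hvO⟩)) (hγ' k hv)
    · intro v hv
      exact ⟨Or.inl (Or.inr (Set.mem_iUnion.mpr ⟨i, hv⟩)), (s i).label_sub _ hv⟩
  have hcw : ∀ i : Fin n,
      cword A (s i) (fun k => σ k ∩ A.I i) (fun k => σ k ∩ (A.Vars i)ᶜ) = σ := by
    intro i
    funext k
    show ((σ k ∩ A.I i ∩ A.I i) ∪ (s i).label ((s i).run (fun k => σ k ∩ A.I i) k))
      ∪ (σ k ∩ (A.Vars i)ᶜ) = σ k
    rw [Set.inter_assoc, Set.inter_self, hrun i, ← hlab i k,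
      ← Set.inter_union_distrib_left]
    exact Set.inter_union_compl (σ k) (A.Vars i)
  have hg : ∀ (j : Fin n) (k : ℕ), σ k ∩ A.Og j = (g j).label ((g j).run σ k) := by
    intro j
    obtain ⟨R, hR0, hRlab, hRtr⟩ := (h j).1
    have hRk : ∀ k, R (((par A s).run γ k) j) ((g j).run σ k) := by
      intro k
      induction k with
      | zero => exact hR0
      | succ k ih =>
        have e1 : ((par A s).run γ (k + 1)) j
            = (s j).trans (((par A s).run γ k) j) (σ k ∩ A.I j) := by
          show (s j).trans _ _ = (s j).trans _ _
          rw [hσI j k]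
        rw [e1]
        exact hRtr _ _ _ Set.inter_subset_right ih
    intro k
    have h1 : σ k ∩ A.Og j = (σ k ∩ A.O j) ∩ A.Og j := by
      ext v
      simp only [Set.mem_inter_iff, Arch.Og]
      tauto
    rw [h1, hlab j k]
    exact hRlab _ _ (hRk k)
  have hvalid : ∀ (i : Fin n) (t : ℕ), ValidHist A g (Rel A Φ i) t σ := by
    intro i t j _ k hkt σh hσh
    have hrc : (g j).run σh k = (g j).run σ k :=
      Moore.run_congr (g j) k (fun l hl => hσh l (hl.trans hkt))
    have h0 : (σh k ∩ A.I j) ∩ A.Og j = ∅ := by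
      ext v
      simp only [Set.mem_inter_iff, Set.mem_empty_iff_false, iff_false, not_and]
      intro hmem hOg
      exact Set.disjoint_left.mp (A.disj_IO j) hmem.2 hOg.1
    have h2 : (g j).label ((g j).run σ k) ∩ A.Og j = (g j).label ((g j).run σ k) :=
      Set.inter_eq_left.mpr ((g j).label_sub _)
    have hrhs : ((σh k ∩ A.I j) ∪ (g j).label ((g j).run σ k)) ∩ A.Og j
        = (g j).label ((g j).run σ k) := by
      rw [Set.union_inter_distrib_right, h0, Set.empty_union, h2]
    show σ k ∩ A.Og j = ((σh k ∩ A.I j) ∪ (g j).label ((g j).run σh k)) ∩ A.Og j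
    rw [hrc, hrhs, hg j k]
  have hsat : ∀ i, satDecomp A Φ i σ := by
    intro i
    have hloc := (h i).2 (fun k => σ k ∩ A.I i) (fun k => σ k ∩ (A.Vars i)ᶜ)
      (fun _ => Set.inter_subset_right) (fun _ => Set.inter_subset_right)
      (by rw [hcw i]; exact hvalid i)
    rwa [hcw i] at hloc
  intro ξ hξ
  by_cases hout : ξ.props ∩ A.out = ∅
  · exact hsat ⟨0, Nat.lt_of_lt_of_le Nat.zero_lt_two A.two_le⟩ ξ ⟨hξ, Or.inr hout⟩
  · obtain ⟨v, hv⟩ := Set.nonempty_iff_ne_empty.mpr hout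
    obtain ⟨t, ⟨j, rfl⟩, hj⟩ := hv.2
    exact hsat j ξ ⟨hξ, Or.inl ⟨v, hv.1, hj⟩⟩

end CertSynth
end
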